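/- arXiv:2101.10941 — 2 statements merged into one kernel-verified Lean document; each statement's English description precedes it below -/
import Mathlib

section
/- Under the Selection model, let M := (A − Price + ρ·u)/σ. Then almost surely E[ (1 − S)·Φ(M)/(1 − Φ(M)) − S | σ(Z) ] ≥ 0. -/
/-!
Write `c = A − Price + ρ·u`. Given `(Z, u)`, the index `c` is known and `ξ ~ N(0, σ²)` is
independent of it, so `P(S = 1 | Z, u) = Φ(c/σ)`. Hence the odds weight `Φ(c/σ)/(1 − Φ(c/σ))`
exactly balances `S` already conditionally on `(Z, u)`: the conditional expectation in the
statement vanishes, first given `(Z, c)` and then, by the tower property, given `Z`.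
-/

open MeasureTheory ProbabilityTheory

/-- Standard normal density. -/
noncomputable def phi (x : ℝ) : ℝ := (Real.sqrt (2 * Real.pi))⁻¹ * Real.exp (-x ^ 2 / 2)

/-- Standard normal CDF. -/
noncomputable def Phi (x : ℝ) : ℝ := ∫ s in Set.Iic x, phi s

/-- Standard normal hazard function (inverse Mills ratio). -/
noncomputable def lam (x : ℝ) : ℝ := phi x / (1 - Phi x)

/-- Mills-ratio-type function `φ(x)/Φ(x)`. -/
noncomputable def mills (x : ℝ) : ℝ := phi x / Phi x

open Set

namespace ProbabilityTheory

variable {Ω α β γ E : Type*} {mΩ : MeasurableSpace Ω} {mα : MeasurableSpace α}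
  {mβ : MeasurableSpace β} [NormedAddCommGroup E] {μ : Measure Ω} {X : Ω → α} {Y : Ω → β}

theorem IndepFun.of_measurable_comap_left [MeasurableSpace γ] {V : Ω → γ}
    (hXY : IndepFun X Y μ) (hV : Measurable[mα.comap X] V) : IndepFun V Y μ :=
  (IndepFun_iff_Indep V Y μ).2 <|
    indep_of_indep_of_le_left ((IndepFun_iff_Indep X Y μ).1 hXY) hV.comap_le

variable [IsFiniteMeasure μ] {f : α × β → E}

theorem IndepFun.integrable_comp_prodMk (hXY : IndepFun X Y μ) (hX : Measurable X)
    (hY : Measurable Y) (hf : StronglyMeasurable f) (C : ℝ)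
    (hsec : ∀ a, Integrable (fun b => f (a, b)) (μ.map Y))
    (hbound : ∀ a, ∫ b, ‖f (a, b)‖ ∂(μ.map Y) ≤ C) :
    Integrable (fun ω => f (X ω, Y ω)) μ := by
  have hlaw : μ.map (fun ω => (X ω, Y ω)) = (μ.map X).prod (μ.map Y) :=
    hXY.map_prod_eq_prod_map_map hX.aemeasurable hY.aemeasurable
  refine (integrable_map_measure hf.aestronglyMeasurable (hX.prodMk hY).aemeasurable).mp ?_
  rw [hlaw, integrable_prod_iff hf.aestronglyMeasurable]
  refine ⟨ae_of_all _ hsec, (integrable_const C).mono' ?_ (ae_of_all _ fun a => ?_)⟩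
  · exact hf.aestronglyMeasurable.norm.integral_prod_right'
  · rw [Real.norm_of_nonneg (integral_nonneg fun _ => norm_nonneg _)]
    exact hbound a

theorem IndepFun.condExp_comp_prodMk_ae_eq [NormedSpace ℝ E] [CompleteSpace E]
    [StandardBorelSpace β] [Nonempty β] (hXY : IndepFun X Y μ) (hX : Measurable X)
    (hY : Measurable Y) (hf : StronglyMeasurable f)
    (hf_int : Integrable (fun ω => f (X ω, Y ω)) μ) :
    μ[fun ω => f (X ω, Y ω) | mα.comap X] =ᵐ[μ] fun ω => ∫ b, f (X ω, b) ∂(μ.map Y) := by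
  have hκ : condDistrib Y X μ =ᵐ[μ.map X] Kernel.const α (μ.map Y) :=
    condDistrib_ae_eq_of_measure_eq_compProd_of_measurable hX hY (by
      rw [Measure.compProd_const]
      exact hXY.map_prod_eq_prod_map_map hX.aemeasurable hY.aemeasurable)
  filter_upwards [condExp_prod_ae_eq_integral_condDistrib hX hY.aemeasurable hf hf_int,
    ae_of_ae_map hX.aemeasurable hκ] with ω hω hκω
  rw [hω, hκω, Kernel.const_apply]

end ProbabilityTheory

lemma phi_eq_gaussianPDFReal : phi = gaussianPDFReal 0 1 := by
  ext x
  simp [phi, gaussianPDFReal]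

lemma Phi_eq_measureReal_Iic (t : ℝ) : Phi t = (gaussianReal 0 1).real (Iic t) := by
  rw [measureReal_def, gaussianReal_apply_eq_integral 0 one_ne_zero, ENNReal.toReal_ofReal
    (integral_nonneg (gaussianPDFReal_nonneg 0 1)), Phi, phi_eq_gaussianPDFReal]

lemma Phi_monotone : Monotone Phi := fun a b hab => by
  simp only [Phi_eq_measureReal_Iic]
  exact measureReal_mono (Iic_subset_Iic.2 hab)

lemma Phi_nonneg (t : ℝ) : 0 ≤ Phi t :=
  Phi_eq_measureReal_Iic t ▸ measureReal_nonneg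

lemma Phi_lt_one (t : ℝ) : Phi t < 1 := by
  have hIoi : gaussianReal 0 1 (Ioi t) ≠ 0 := fun h => by
    simpa using gaussianReal_absolutelyContinuous' 0 one_ne_zero h
  rw [← sub_pos, Phi_eq_measureReal_Iic, ← probReal_compl_eq_one_sub measurableSet_Iic,
    compl_Iic]
  exact ENNReal.toReal_pos hIoi (measure_ne_top _ _)

lemma measureReal_gaussianReal_Iic {σ : ℝ} (hσ : 0 < σ) (c : ℝ) :
    (gaussianReal 0 (σ ^ 2).toNNReal).real (Iic c) = Phi (c / σ) := by
  have hmap : (gaussianReal 0 1).map (σ * ·) = gaussianReal 0 (σ ^ 2).toNNReal := by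
    rw [gaussianReal_map_const_mul, mul_zero, mul_one]
    congr
    exact (max_eq_left (sq_nonneg σ)).symm
  have hpre : (σ * ·) ⁻¹' Iic c = Iic (c / σ) := by
    ext x
    simp [le_div_iff₀ hσ, mul_comm]
  rw [← hmap, map_measureReal_apply (measurable_const_mul σ) measurableSet_Iic, hpre,
    Phi_eq_measureReal_Iic]

lemma ite_nonneg_add_eq_indicator (c : ℝ) :
    (fun x : ℝ => if 0 ≤ c + x then (1 : ℝ) else 0) = (Ici (-c)).indicator 1 := by
  ext x
  simp [indicator_apply, neg_le_iff_add_nonneg, add_comm]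

lemma integrable_ite_nonneg_add (c : ℝ) (μ : Measure ℝ) [IsFiniteMeasure μ] :
    Integrable (fun x : ℝ => if 0 ≤ c + x then (1 : ℝ) else 0) μ := by
  rw [ite_nonneg_add_eq_indicator]
  exact (integrable_const 1).indicator measurableSet_Ici

lemma integral_ite_nonneg_add_gaussianReal {σ : ℝ} (hσ : 0 < σ) (c : ℝ) :
    ∫ x, (if 0 ≤ c + x then (1 : ℝ) else 0) ∂(gaussianReal 0 (σ ^ 2).toNNReal) = Phi (c / σ) := by
  have hpre : (fun x : ℝ => -x) ⁻¹' Iic c = Ici (-c) := by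
    ext x
    simp
  rw [ite_nonneg_add_eq_indicator, integral_indicator_one measurableSet_Ici, ← hpre,
    ← map_measureReal_apply measurable_neg measurableSet_Iic, gaussianReal_map_neg, neg_zero,
    measureReal_gaussianReal_Iic hσ]

-- `c` plays the role of the index `A − Price + ρ·u` and `x` that of the noise `ξ`.
noncomputable def oddsScore (σ c x : ℝ) : ℝ :=
  (1 - if 0 ≤ c + x then (1 : ℝ) else 0) * Phi (c / σ) / (1 - Phi (c / σ))
    - if 0 ≤ c + x then (1 : ℝ) else 0

lemma measurable_oddsScore (σ : ℝ) : Measurable fun p : ℝ × ℝ => oddsScore σ p.1 p.2 := by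
  have hPhi : Measurable fun p : ℝ × ℝ => Phi (p.1 / σ) :=
    Phi_monotone.measurable.comp (measurable_fst.div_const σ)
  have hstep : Measurable fun p : ℝ × ℝ => if 0 ≤ p.1 + p.2 then (1 : ℝ) else 0 :=
    Measurable.ite (measurableSet_le measurable_const (measurable_fst.add measurable_snd))
      measurable_const measurable_const
  exact (((measurable_const.sub hstep).mul hPhi).div (measurable_const.sub hPhi)).sub hstep

lemma oddsScore_eq (σ c x : ℝ) :
    oddsScore σ c x = Phi (c / σ) / (1 - Phi (c / σ))
      - (1 - Phi (c / σ))⁻¹ * if 0 ≤ c + x then (1 : ℝ) else 0 := by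
  have h := (sub_pos.2 (Phi_lt_one (c / σ))).ne'
  rw [oddsScore]
  split_ifs <;> field_simp <;> ring

lemma integrable_oddsScore (σ c : ℝ) (μ : Measure ℝ) [IsFiniteMeasure μ] :
    Integrable (fun x => oddsScore σ c x) μ := by
  simp_rw [oddsScore_eq]
  exact (integrable_const _).sub ((integrable_ite_nonneg_add c μ).const_mul _)

lemma norm_oddsScore_eq (σ c x : ℝ) :
    ‖oddsScore σ c x‖ = Phi (c / σ) / (1 - Phi (c / σ))
      + (1 - Phi (c / σ) / (1 - Phi (c / σ))) * if 0 ≤ c + x then (1 : ℝ) else 0 := by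
  have h := Phi_lt_one (c / σ)
  rw [oddsScore]
  split_ifs
  · simp
  · simp [abs_of_nonneg (Phi_nonneg _), abs_of_pos (sub_pos.2 h)]

lemma integral_oddsScore_gaussianReal {σ : ℝ} (hσ : 0 < σ) (c : ℝ) :
    ∫ x, oddsScore σ c x ∂(gaussianReal 0 (σ ^ 2).toNNReal) = 0 := by
  have h := (sub_pos.2 (Phi_lt_one (c / σ))).ne'
  simp_rw [oddsScore_eq]
  rw [integral_sub (integrable_const _) ((integrable_ite_nonneg_add c _).const_mul _),
    integral_const_mul, integral_ite_nonneg_add_gaussianReal hσ]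
  simp only [integral_const, probReal_univ, smul_eq_mul, one_mul]
  field_simp
  ring

lemma integral_norm_oddsScore_gaussianReal_le {σ : ℝ} (hσ : 0 < σ) (c : ℝ) :
    ∫ x, ‖oddsScore σ c x‖ ∂(gaussianReal 0 (σ ^ 2).toNNReal) ≤ 2 := by
  have h := Phi_lt_one (c / σ)
  simp_rw [norm_oddsScore_eq]
  rw [integral_add (integrable_const _) ((integrable_ite_nonneg_add c _).const_mul _),
    integral_const_mul, integral_ite_nonneg_add_gaussianReal hσ]
  calc _ = 2 * Phi (c / σ) := by
        have := (sub_pos.2 h).ne'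
        simp only [integral_const, probReal_univ, smul_eq_mul, one_mul]
        field_simp
        ring
    _ ≤ 2 := by linarith

theorem stmt_12_general
    {Ω : Type*} [MeasurableSpace Ω] (P : Measure Ω) [IsProbabilityMeasure P]
    {k : ℕ} (Z : Ω → (Fin k → ℝ)) (hZmeas : Measurable Z)
    (A B u ξ : Ω → ℝ)
    (hAZ : Measurable[MeasurableSpace.comap Z inferInstance] A)
    (hBZ : Measurable[MeasurableSpace.comap Z inferInstance] B)
    (humeas : Measurable u) (hξmeas : Measurable ξ)
    (σ ρ : ℝ) (hσ : 0 < σ)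
    (hξindep : IndepFun ξ (fun ω => (Z ω, u ω)) P)
    (hξlaw : Measure.map ξ P = gaussianReal 0 (Real.toNNReal (σ ^ 2)))
    (Price S : Ω → ℝ)
    (hPrice : Price = fun ω => B ω + u ω)
    (hS : S = fun ω => if 0 ≤ A ω - Price ω + ρ * u ω + ξ ω then (1 : ℝ) else 0)
     :
    0 ≤ᵐ[P] P[fun ω => (1 - S ω) * Phi ((A ω - Price ω + ρ * u ω) / σ) / (1 - Phi ((A ω - Price ω + ρ * u ω) / σ))
        - S ω
      | MeasurableSpace.comap Z inferInstance] := by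
  subst hPrice hS
  set c : Ω → ℝ := fun ω => A ω - (B ω + u ω) + ρ * u ω
  set W : Ω → (Fin k → ℝ) × ℝ := fun ω => (Z ω, c ω)
  have hZ : Measurable[MeasurableSpace.comap (fun ω => (Z ω, u ω)) inferInstance] Z :=
    measurable_fst.comp (comap_measurable _)
  have hu : Measurable[MeasurableSpace.comap (fun ω => (Z ω, u ω)) inferInstance] u :=
    measurable_snd.comp (comap_measurable _)
  have hW_Zu : Measurable[MeasurableSpace.comap (fun ω => (Z ω, u ω)) inferInstance] W :=
    hZ.prodMk (((hAZ.mono hZ.comap_le le_rfl).sub ((hBZ.mono hZ.comap_le le_rfl).add hu)).add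
      (hu.const_mul ρ))
  have hW : Measurable W := hW_Zu.mono (hZmeas.prodMk humeas).comap_le le_rfl
  have hindep : IndepFun W ξ P := hξindep.symm.of_measurable_comap_left hW_Zu
  have hf : StronglyMeasurable fun p : ((Fin k → ℝ) × ℝ) × ℝ => oddsScore σ p.1.2 p.2 :=
    ((measurable_oddsScore σ).comp ((measurable_snd.comp measurable_fst).prodMk
      measurable_snd)).stronglyMeasurable
  have hint : Integrable (fun ω => oddsScore σ (W ω).2 (ξ ω)) P :=
    hindep.integrable_comp_prodMk hW hξmeas hf 2
      (fun w => hξlaw ▸ integrable_oddsScore σ w.2 _)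
      (fun w => hξlaw ▸ integral_norm_oddsScore_gaussianReal_le hσ w.2)
  have hcondW : P[fun ω => oddsScore σ (W ω).2 (ξ ω) | MeasurableSpace.comap W inferInstance]
      =ᵐ[P] 0 := by
    filter_upwards [hindep.condExp_comp_prodMk_ae_eq hW hξmeas hf hint] with ω hω
    rw [hω, hξlaw, integral_oddsScore_gaussianReal hσ, Pi.zero_apply]
  have hZW : MeasurableSpace.comap Z inferInstance ≤ MeasurableSpace.comap W inferInstance :=
    (measurable_fst.comp (comap_measurable W)).comap_le
  filter_upwards [(condExp_condExp_of_le hZW hW.comap_le).symm.trans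
    ((condExp_congr_ae hcondW).trans condExp_zero.eventuallyEq)] with ω hω
  exact hω.ge

/-- Second odds-based moment inequality (ob2_rho). -/
theorem stmt_12
    {Ω : Type*} [MeasurableSpace Ω] (P : Measure Ω) [IsProbabilityMeasure P]
    {k : ℕ} (Z : Ω → (Fin k → ℝ)) (hZmeas : Measurable Z)
    (A B u ξ : Ω → ℝ)
    (hAint : Integrable A P) (hBint : Integrable B P) (huint : Integrable u P)
    (hAZ : Measurable[MeasurableSpace.comap Z inferInstance] A)
    (hBZ : Measurable[MeasurableSpace.comap Z inferInstance] B)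
    (humeas : Measurable u) (hξmeas : Measurable ξ)
    (huZ : P[u | MeasurableSpace.comap Z inferInstance] =ᵐ[P] 0)
    (σ ρ : ℝ) (hσ : 0 < σ)
    (hξindep : IndepFun ξ (fun ω => (Z ω, u ω)) P)
    (hξlaw : Measure.map ξ P = gaussianReal 0 (Real.toNNReal (σ ^ 2)))
    (Price S : Ω → ℝ)
    (hPrice : Price = fun ω => B ω + u ω)
    (hS : S = fun ω => if 0 ≤ A ω - Price ω + ρ * u ω + ξ ω then (1 : ℝ) else 0)
     :
    0 ≤ᵐ[P] P[fun ω => (1 - S ω) * Phi ((A ω - Price ω + ρ * u ω) / σ) / (1 - Phi ((A ω - Price ω + ρ * u ω) / σ))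
        - S ω
      | MeasurableSpace.comap Z inferInstance] :=
  stmt_12_general P Z hZmeas A B u ξ hAZ hBZ humeas hξmeas σ ρ hσ hξindep hξlaw Price S hPrice hS
end

section
/- The standard normal hazard function λ(x) = φ(x)/(1 − Φ(x)) (equivalently, x ↦ φ(−x)/Φ(−x)) is differentiable on ℝ and its derivative lies strictly in the open interval (0, 1) at every point of ℝ. In particular, λ(x) > x for all x ∈ ℝ, i.e., φ(x) > x·(1 − Φ(x)) for all x ∈ ℝ. -/
/-!
With `Q = 1 - Φ` the upper tail, `Q' = -φ` and `φ' = -xφ`, so `λ = φ / Q` satisfies the Riccati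
equation `λ' = λ (λ - x)`. Hence `0 < λ'` amounts to `x Q < φ`, and `λ' < 1` to
`φ² - x φ Q < Q²`. The first holds because `φ(x) - x Q(x) = ∫ₓ^∞ (s - x) φ(s) ds`, as
`s φ(s) = -φ'(s)`. For the second, the difference `Q² - φ² + x φ Q` tends to `0` at `+∞` and has
derivative `-φ ((1 + x²) Q - x φ)`, so it is positive once the lower Mills-ratio bound
`x φ < (1 + x²) Q` is known; that bound follows in the same way, the derivative of
`(1 + x²) Q - x φ` being `2 (x Q - φ) < 0`.
-/

open MeasureTheory ProbabilityTheory

open Filter Topology Set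

theorem pos_of_hasDerivAt_neg_of_tendsto_zero {g g' : ℝ → ℝ} (hg : ∀ x, HasDerivAt g (g' x) x)
    (hg' : ∀ x, g' x < 0) (hlim : Tendsto g atTop (𝓝 0)) (x : ℝ) : 0 < g x := by
  have hanti : StrictAnti g := strictAnti_of_deriv_neg fun x => (hg x).deriv ▸ hg' x
  calc 0 ≤ g (x + 1) := hanti.antitone.le_of_tendsto hlim _
    _ < g x := hanti (lt_add_one x)

lemma phi_pos (x : ℝ) : 0 < phi x := by
  unfold phi; positivity

lemma continuous_phi : Continuous phi := by
  unfold phi; fun_prop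

lemma phi_eq_mul_exp_neg_mul_sq :
    phi = fun x => (Real.sqrt (2 * Real.pi))⁻¹ * Real.exp (-(1 / 2) * x ^ 2) := by
  ext x; unfold phi; ring_nf

lemma integrable_phi : Integrable phi := by
  rw [phi_eq_mul_exp_neg_mul_sq]
  exact (integrable_exp_neg_mul_sq (by norm_num)).const_mul _

lemma integrable_mul_phi : Integrable fun x => x * phi x := by
  simp only [phi_eq_mul_exp_neg_mul_sq, mul_left_comm _ (Real.sqrt (2 * Real.pi))⁻¹]
  exact (integrable_mul_exp_neg_mul_sq (by norm_num)).const_mul _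

lemma integral_phi : ∫ x, phi x = 1 := by
  rw [phi_eq_mul_exp_neg_mul_sq, integral_const_mul, integral_gaussian,
    show Real.pi / (1 / 2) = 2 * Real.pi by ring, inv_mul_cancel₀ (by positivity)]

lemma hasDerivAt_phi (x : ℝ) : HasDerivAt phi (-x * phi x) x := by
  have h : HasDerivAt (fun x : ℝ => -x ^ 2 / 2) (-x) x :=
    ((hasDerivAt_pow 2 x).neg.div_const 2).congr_deriv (by ring)
  exact (h.exp.const_mul (Real.sqrt (2 * Real.pi))⁻¹).congr_deriv (by unfold phi; ring)

lemma tendsto_phi_atTop : Tendsto phi atTop (𝓝 0) := by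
  have h : Tendsto (fun x : ℝ => -x ^ 2 / 2) atTop atBot :=
    (tendsto_neg_atTop_atBot.comp (tendsto_pow_atTop two_ne_zero)).atBot_div_const (by norm_num)
  have := (Real.tendsto_exp_atBot.comp h).const_mul (Real.sqrt (2 * Real.pi))⁻¹
  rwa [mul_zero] at this

lemma tendsto_mul_phi_atTop : Tendsto (fun x => x * phi x) atTop (𝓝 0) := by
  have h : Tendsto (fun x : ℝ => x * Real.exp (-(1 / 2) * x ^ 2)) atTop (𝓝 0) :=
    ((Asymptotics.isBigO_refl (fun x : ℝ => x) atTop).mul_isLittleO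
      (exp_neg_mul_sq_isLittleO_exp_neg (by norm_num))).trans_tendsto
      (by simpa using Real.tendsto_pow_mul_exp_neg_atTop_nhds_zero 1)
  simpa [phi_eq_mul_exp_neg_mul_sq, mul_left_comm] using h.const_mul (Real.sqrt (2 * Real.pi))⁻¹

lemma integral_Ioi_mul_phi (x : ℝ) : ∫ s in Ioi x, s * phi s = phi x := by
  have hderiv (s : ℝ) (_ : s ∈ Ici x) : HasDerivAt (fun u => -phi u) (s * phi s) s :=
    (hasDerivAt_phi s).neg.congr_deriv (by ring)
  simpa using integral_Ioi_of_hasDerivAt_of_tendsto' hderiv integrable_mul_phi.integrableOn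
    tendsto_phi_atTop.neg

noncomputable def Q (x : ℝ) : ℝ := ∫ s in Ioi x, phi s

lemma hasDerivAt_Phi (x : ℝ) : HasDerivAt Phi (phi x) x := by
  have h : HasDerivAt (fun u => Phi 0 + ∫ t in (0 : ℝ)..u, phi t) (phi x) x :=
    (intervalIntegral.integral_hasDerivAt_right integrable_phi.intervalIntegrable
      (continuous_phi.stronglyMeasurableAtFilter _ _) continuous_phi.continuousAt).const_add _
  refine h.congr_of_eventuallyEq (Eventually.of_forall fun u => ?_)
  have := intervalIntegral.integral_Iic_sub_Iic (integrable_phi.integrableOn (s := Iic 0))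
    (integrable_phi.integrableOn (s := Iic u))
  simp only [Phi] at this ⊢
  linarith

lemma one_sub_Phi (x : ℝ) : 1 - Phi x = Q x := by
  have := intervalIntegral.integral_Iic_add_Ioi (b := x) integrable_phi.integrableOn
    integrable_phi.integrableOn
  rw [integral_phi] at this
  simp only [Phi, Q]
  linarith

lemma hasDerivAt_Q (x : ℝ) : HasDerivAt Q (-phi x) x :=
  ((hasDerivAt_Phi x).const_sub 1).congr_of_eventuallyEq
    (Eventually.of_forall fun u => (one_sub_Phi u).symm)

lemma Q_pos (x : ℝ) : 0 < Q x := by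
  refine (setIntegral_pos_iff_support_of_nonneg_ae (ae_of_all _ fun s => (phi_pos s).le)
    integrable_phi.integrableOn).2 ?_
  simp [Function.support, (phi_pos _).ne']

lemma mul_Q_lt_phi (x : ℝ) : x * Q x < phi x := by
  have hint : IntegrableOn (fun s => (s - x) * phi s) (Ioi x) := by
    simp only [sub_mul]
    exact integrable_mul_phi.integrableOn.sub (integrable_phi.const_mul x).integrableOn
  have hpos : 0 < ∫ s in Ioi x, (s - x) * phi s := by
    refine (setIntegral_pos_iff_support_of_nonneg_ae ?_ hint).2 ?_
    · filter_upwards [ae_restrict_mem measurableSet_Ioi] with s hs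
      exact mul_nonneg (sub_nonneg.2 hs.le) (phi_pos s).le
    · have : Ioi x ⊆ Function.support (fun s => (s - x) * phi s) := fun s hs =>
        (mul_pos (sub_pos.2 hs) (phi_pos s)).ne'
      rw [Set.inter_eq_right.2 this, Real.volume_Ioi]
      exact ENNReal.zero_lt_top
  have hsplit : ∫ s in Ioi x, (s - x) * phi s = phi x - x * Q x := by
    simp only [sub_mul]
    rw [integral_sub integrable_mul_phi.integrableOn (integrable_phi.const_mul x).integrableOn,
      integral_Ioi_mul_phi, integral_const_mul, Q]
  linarith

lemma tendsto_Q_atTop : Tendsto Q atTop (𝓝 0) := by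
  refine tendsto_of_tendsto_of_tendsto_of_le_of_le' tendsto_const_nhds tendsto_phi_atTop
    (Eventually.of_forall fun x => (Q_pos x).le) ?_
  filter_upwards [eventually_ge_atTop 1] with x hx
  nlinarith [mul_Q_lt_phi x, Q_pos x]

lemma tendsto_sq_mul_Q_atTop : Tendsto (fun x => x ^ 2 * Q x) atTop (𝓝 0) := by
  refine tendsto_of_tendsto_of_tendsto_of_le_of_le' tendsto_const_nhds tendsto_mul_phi_atTop
    (Eventually.of_forall fun x => mul_nonneg (sq_nonneg x) (Q_pos x).le) ?_
  filter_upwards [eventually_ge_atTop 0] with x hx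
  nlinarith [mul_Q_lt_phi x]

lemma mul_phi_lt_one_add_sq_mul_Q (x : ℝ) : x * phi x < (1 + x ^ 2) * Q x := by
  suffices h : ∀ x, 0 < (1 + x ^ 2) * Q x - x * phi x from sub_pos.1 (h x)
  refine pos_of_hasDerivAt_neg_of_tendsto_zero (g' := fun x => 2 * (x * Q x - phi x))
    (fun x => ?_) (fun x => by linarith [mul_Q_lt_phi x]) ?_
  · have := (((hasDerivAt_pow 2 x).const_add 1).mul (hasDerivAt_Q x)).sub
      ((hasDerivAt_id x).mul (hasDerivAt_phi x))
    exact this.congr_deriv (by simp only [id]; ring)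
  · have := (tendsto_Q_atTop.add tendsto_sq_mul_Q_atTop).sub tendsto_mul_phi_atTop
    rw [add_zero, sub_zero] at this
    exact this.congr fun x => by ring

lemma phi_sq_sub_lt_Q_sq (x : ℝ) : phi x ^ 2 - x * phi x * Q x < Q x ^ 2 := by
  suffices h : ∀ x, 0 < Q x ^ 2 - phi x ^ 2 + x * phi x * Q x by linarith [h x]
  refine pos_of_hasDerivAt_neg_of_tendsto_zero
    (g' := fun x => -phi x * ((1 + x ^ 2) * Q x - x * phi x)) (fun x => ?_)
    (fun x => mul_neg_of_neg_of_pos (neg_neg_of_pos (phi_pos x))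
      (sub_pos.2 (mul_phi_lt_one_add_sq_mul_Q x))) ?_
  · have := (((hasDerivAt_Q x).pow 2).sub ((hasDerivAt_phi x).pow 2)).add
      (((hasDerivAt_id x).mul (hasDerivAt_phi x)).mul (hasDerivAt_Q x))
    exact this.congr_deriv (by simp only [id, Pi.mul_apply]; ring)
  · have := ((tendsto_Q_atTop.pow 2).sub (tendsto_phi_atTop.pow 2)).add
      (tendsto_mul_phi_atTop.mul tendsto_Q_atTop)
    simpa using this

lemma lam_eq_div_Q (x : ℝ) : lam x = phi x / Q x := by
  rw [lam, one_sub_Phi]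

lemma hasDerivAt_lam (x : ℝ) : HasDerivAt lam (lam x * (lam x - x)) x := by
  rw [show lam = fun x => phi x / Q x from funext lam_eq_div_Q]
  refine ((hasDerivAt_phi x).div (hasDerivAt_Q x) (Q_pos x).ne').congr_deriv ?_
  field_simp [(Q_pos x).ne']
  ring

lemma lam_pos (x : ℝ) : 0 < lam x := by
  rw [lam_eq_div_Q]
  exact div_pos (phi_pos x) (Q_pos x)

lemma lt_lam (x : ℝ) : x < lam x := by
  rw [lam_eq_div_Q, lt_div_iff₀ (Q_pos x)]
  exact mul_Q_lt_phi x

lemma lam_mul_lam_sub_lt_one (x : ℝ) : lam x * (lam x - x) < 1 := by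
  have hQ := Q_pos x
  have h : lam x * (lam x - x) = (phi x ^ 2 - x * phi x * Q x) / Q x ^ 2 := by
    rw [lam_eq_div_Q]; field_simp
  rw [h, div_lt_one (by positivity)]
  exact phi_sq_sub_lt_Q_sq x

/-- the standard normal hazard `λ(x) = φ(x)/(1 − Φ(x))` is differentiable
with derivative strictly in `(0, 1)`; in particular `λ(x) > x`, i.e. `φ(x) > x·(1 − Φ(x))`. -/
theorem stmt_14 :
    (∀ x : ℝ, DifferentiableAt ℝ lam x ∧ deriv lam x ∈ Set.Ioo (0 : ℝ) 1) ∧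
    (∀ x : ℝ, x < lam x) ∧ (∀ x : ℝ, x * (1 - Phi x) < phi x) := by
  refine ⟨fun x => ⟨(hasDerivAt_lam x).differentiableAt, ?_⟩, lt_lam, fun x => ?_⟩
  · rw [(hasDerivAt_lam x).deriv]
    exact ⟨mul_pos (lam_pos x) (sub_pos.2 (lt_lam x)), lam_mul_lam_sub_lt_one x⟩
  · rw [one_sub_Phi]
    exact mul_Q_lt_phi x
end
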